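/- arXiv:2005.06227 — 6 statements merged into one kernel-verified Lean document; each statement's English description precedes it below -/
import Mathlib

section
/- Let P be a preorder and D : Set P → P → Prop a one-step fact-derivation relation that is one-step monotone with respect to the Hoare order: whenever Δ ⊑ Δ' and D Δ f hold, there exists f' with f ≤ f' and D Δ' f'. Then the multi-step derivability relation is monotone: for all abstract configurations Δ, Δ', Δ_F with Δ ⊑ Δ', if Δ_F is derivable from Δ then there exists Δ_F' derivable from Δ' with Δ_F ⊑ Δ_F'. -/
/-- Hoare order on sets of abstract facts over a preorder. -/
def HoareLe {P : Type*} [Preorder P] (Δ₁ Δ₂ : Set P) : Prop :=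
  ∀ p₁ ∈ Δ₁, ∃ p₂ ∈ Δ₂, p₁ ≤ p₂

/-- One derivation step: derive a fact f from Δ and add it. -/
def DeriveStep {P : Type*} (D : Set P → P → Prop) (Δ Δ'' : Set P) : Prop :=
  ∃ f, D Δ f ∧ Δ'' = Δ ∪ {f}

/-! One-step monotonicity makes the Hoare order a simulation of `DeriveStep D` by itself: a step
adding `f` is matched by a step adding some `f' ≥ f`. Simulations lift along reflexive-transitive
closures by induction on the derivation. -/

theorem Relation.ReflTransGen.exists_of_simulation {α β : Type*} {r : α → α → Prop}
    {s : β → β → Prop} {sim : α → β → Prop}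
    (hstep : ∀ a a' b, sim a b → r a a' → ∃ b', s b b' ∧ sim a' b')
    {a a' : α} {b : β} (hab : sim a b) (h : Relation.ReflTransGen r a a') :
    ∃ b', Relation.ReflTransGen s b b' ∧ sim a' b' := by
  induction h with
  | refl => exact ⟨b, .refl, hab⟩
  | tail _ hr ih =>
    obtain ⟨c, hbc, hsim⟩ := ih
    obtain ⟨c', hcc', hsim'⟩ := hstep _ _ c hsim hr
    exact ⟨c', hbc.tail hcc', hsim'⟩

namespace HoareLe

variable {P : Type*} [Preorder P]

theorem union {Δ₁ Δ₁' Δ₂ Δ₂' : Set P} (h₁ : HoareLe Δ₁ Δ₁') (h₂ : HoareLe Δ₂ Δ₂') :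
    HoareLe (Δ₁ ∪ Δ₂) (Δ₁' ∪ Δ₂') := by
  rintro p (hp | hp)
  · obtain ⟨q, hq, hpq⟩ := h₁ p hp
    exact ⟨q, Or.inl hq, hpq⟩
  · obtain ⟨q, hq, hpq⟩ := h₂ p hp
    exact ⟨q, Or.inr hq, hpq⟩

theorem singleton {f f' : P} (h : f ≤ f') : HoareLe {f} {f'} := by
  rintro p rfl
  exact ⟨f', rfl, h⟩

end HoareLe

theorem DeriveStep.exists_of_hoareLe {P : Type*} [Preorder P] {D : Set P → P → Prop}
    (hmono : ∀ Δ Δ' f, HoareLe Δ Δ' → D Δ f → ∃ f', f ≤ f' ∧ D Δ' f')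
    {Δ Δ' Δ'' : Set P} (hle : HoareLe Δ Δ') (hstep : DeriveStep D Δ Δ'') :
    ∃ Δ''', DeriveStep D Δ' Δ''' ∧ HoareLe Δ'' Δ''' := by
  obtain ⟨f, hDf, rfl⟩ := hstep
  obtain ⟨f', hff', hDf'⟩ := hmono Δ Δ' f hle hDf
  exact ⟨Δ' ∪ {f'}, ⟨f', hDf', rfl⟩, hle.union (.singleton hff')⟩

/-- One-step monotonicity of fact derivation implies monotonicity of
multi-step derivability with respect to the Hoare order. -/
theorem derivable_monotone {P : Type*} [Preorder P] (D : Set P → P → Prop)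
    (hmono : ∀ Δ Δ' f, HoareLe Δ Δ' → D Δ f → ∃ f', f ≤ f' ∧ D Δ' f') :
    ∀ Δ Δ' ΔF : Set P, HoareLe Δ Δ' →
      Relation.ReflTransGen (DeriveStep D) Δ ΔF →
      ∃ ΔF', Relation.ReflTransGen (DeriveStep D) Δ' ΔF' ∧ HoareLe ΔF ΔF' :=
  fun _ _ _ hle hderiv =>
    hderiv.exists_of_simulation (fun _ _ _ => DeriveStep.exists_of_hoareLe hmono) hle
end

section
/- Let C be a type, S a binary relation on C (the small-step semantics), P a preorder, α : C → Set P, and D : Set P → P → Prop a one-step fact-derivation relation, such that (α, D) soundly approximates S: for all c, c' with (c, c') in the reflexive-transitive closure of S, and every Δ with α(c) ⊑ Δ, there exists Δ' derivable from Δ with α(c') ⊑ Δ'. Let P₀, R : Set C with α(c') ≠ ∅ for every c' ∈ R, and let Δ_P : Set P satisfy α*(P₀) ⊑ Δ_P. If every Δ' derivable from Δ_P satisfies Δ' ∩ Δ_query(R) = ∅, where Δ_query(R) = {p' | ∃ p ∈ α*(R), p ≤ p'}, then no configuration in R is reachable from a configuration in P₀: there is no c ∈ P₀ and c' ∈ R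 with (c, c') in the reflexive-transitive closure of S. -/
/-- Lift of an abstraction function to sets of configurations. -/
def liftAbs {C P : Type*} (α : C → Set P) (S : Set C) : Set P :=
  ⋃ c ∈ S, α c

theorem subset_liftAbs {C P : Type*} (α : C → Set P) {S : Set C} {c : C} (hc : c ∈ S) :
    α c ⊆ liftAbs α S :=
  Set.subset_biUnion_of_mem hc

theorem HoareLe.of_subset_left {P : Type*} [Preorder P] {Δ₁ Δ₂ Δ : Set P} (hsub : Δ₁ ⊆ Δ₂)
    (h : HoareLe Δ₂ Δ) : HoareLe Δ₁ Δ :=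
  fun p hp => h p (hsub hp)

theorem HoareLe.inter_upperClosure_nonempty {P : Type*} [Preorder P] {A B Δ : Set P}
    (h : HoareLe A Δ) (hA : A.Nonempty) (hAB : A ⊆ B) :
    (Δ ∩ upperClosure B).Nonempty := by
  obtain ⟨p, hp⟩ := hA
  obtain ⟨q, hq, hpq⟩ := h p hp
  exact ⟨q, hq, p, hAB hp, hpq⟩

/-- If no derivable abstract configuration meets the query set for R,
then no configuration in R is reachable from a configuration in P₀. -/
theorem unreachability_from_query {C P : Type*} [Preorder P] (S : C → C → Prop)
    (α : C → Set P) (D : Set P → P → Prop)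
    (hsound : ∀ c c', Relation.ReflTransGen S c c' →
      ∀ Δ : Set P, HoareLe (α c) Δ →
        ∃ Δ', Relation.ReflTransGen (DeriveStep D) Δ Δ' ∧ HoareLe (α c') Δ')
    (P₀ R : Set C) (hR : ∀ c' ∈ R, (α c').Nonempty)
    (ΔP : Set P) (hΔP : HoareLe (liftAbs α P₀) ΔP)
    (hquery : ∀ Δ', Relation.ReflTransGen (DeriveStep D) ΔP Δ' →
      Δ' ∩ {p' : P | ∃ p ∈ liftAbs α R, p ≤ p'} = ∅) :
    ¬ ∃ c ∈ P₀, ∃ c' ∈ R, Relation.ReflTransGen S c c' := by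
  rintro ⟨c, hc, c', hc', hreach⟩
  obtain ⟨Δ', hder, hΔ'⟩ :=
    hsound c c' hreach ΔP (hΔP.of_subset_left (subset_liftAbs α hc))
  exact (hΔ'.inter_upperClosure_nonempty (hR c' hc') (subset_liftAbs α hc')).ne_empty
    (hquery Δ' hder)
end

section
/- Let C be a type, S a binary relation on C, P a preorder, α : C → Set P, and D : Set P → P → Prop a one-step fact-derivation relation that is monotone with respect to set inclusion (X ⊆ Y and D X f imply D Y f). Suppose (α, D) soundly approximates S: for all c, c' with (c, c') in the reflexive-transitive closure of S, and every Δ with α(c) ⊑ Δ, there exists Δ' derivable from Δ with α(c') ⊑ Δ'. Then for every c : C and every Δ with α(c) ⊑ Δ, the abstraction of the set of configurations reachable from c is below the least fixed point of the abstract step function: α*({c' | ReflTransGen S c c'}) ⊑ lfp (X ↦ {p | D X p} ∪ Δ), where the least fixed point is taken in the complete lattice (Set P, ⊆) and ⊑ is the Hoare order. -/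
/- Everything derivable from Δ stays inside `lfp G`: Δ ⊆ G (lfp G) = lfp G, and a fact derived
from X ⊆ lfp G lies in G X ⊆ G (lfp G) = lfp G by monotonicity of G. Soundness puts each α c'
below some set derivable from Δ, hence below `lfp G`. -/

theorem HoareLe.mono_right {P : Type*} [Preorder P] {Δ₁ Δ₂ Δ₃ : Set P}
    (h : HoareLe Δ₁ Δ₂) (hsub : Δ₂ ⊆ Δ₃) : HoareLe Δ₁ Δ₃ := fun p hp =>
  let ⟨q, hq, hpq⟩ := h p hp
  ⟨q, hsub hq, hpq⟩

theorem hoareLe_liftAbs_iff {C P : Type*} [Preorder P] {α : C → Set P} {S : Set C}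
    {Δ : Set P} : HoareLe (liftAbs α S) Δ ↔ ∀ c ∈ S, HoareLe (α c) Δ := by
  simp only [HoareLe, liftAbs, Set.mem_iUnion, exists_prop]
  exact ⟨fun h c hc p hp => h p ⟨c, hc, hp⟩, fun h p ⟨c, hc, hp⟩ => h c hc p hp⟩

theorem subset_of_reflTransGen_deriveStep {P : Type*} {D : Set P → P → Prop} {L X Y : Set P}
    (hL : ∀ Z ⊆ L, ∀ f, D Z f → f ∈ L) (hXY : Relation.ReflTransGen (DeriveStep D) X Y)
    (hX : X ⊆ L) : Y ⊆ L := by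
  induction hXY with
  | refl => exact hX
  | tail _ hstep ih =>
    obtain ⟨f, hf, rfl⟩ := hstep
    exact Set.union_subset ih (Set.singleton_subset_iff.2 (hL _ ih f hf))

theorem subset_lfp_of_reflTransGen_deriveStep {P : Type*} {D : Set P → P → Prop}
    {Δ Δ' : Set P} {G : Set P →o Set P} (hG : ∀ X : Set P, G X = {p | D X p} ∪ Δ)
    (hΔ' : Relation.ReflTransGen (DeriveStep D) Δ Δ') : Δ' ⊆ OrderHom.lfp G := by
  have hclosed : ∀ X ⊆ OrderHom.lfp G, ∀ f, D X f → f ∈ OrderHom.lfp G := by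
    intro X hX f hf
    rw [← G.map_lfp]
    exact G.monotone hX (by rw [hG]; exact Or.inl hf)
  have hΔ : Δ ⊆ OrderHom.lfp G := by
    rw [← G.map_lfp, hG]
    exact Set.subset_union_right
  exact subset_of_reflTransGen_deriveStep hclosed hΔ' hΔ

theorem sound_approx_le_lfp_general {C P : Type*} [Preorder P] (S : C → C → Prop)
    (α : C → Set P) (D : Set P → P → Prop)
    (hsound : ∀ c c', Relation.ReflTransGen S c c' →
      ∀ Δ : Set P, HoareLe (α c) Δ →
        ∃ Δ', Relation.ReflTransGen (DeriveStep D) Δ Δ' ∧ HoareLe (α c') Δ')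
    (c : C) (Δ : Set P) (hΔ : HoareLe (α c) Δ)
    (G : Set P →o Set P) (hG : ∀ X : Set P, G X = {p | D X p} ∪ Δ) :
    HoareLe (liftAbs α {c' | Relation.ReflTransGen S c c'}) (OrderHom.lfp G) := by
  refine hoareLe_liftAbs_iff.2 fun c' hc' => ?_
  obtain ⟨Δ', hderiv, hle⟩ := hsound c c' hc' Δ hΔ
  exact hle.mono_right (subset_lfp_of_reflTransGen_deriveStep hG hderiv)

/-- A sound approximation yields: the abstraction of the set of reachable configurations
is below (Hoare order) the least fixed point of the abstract step function. -/
theorem sound_approx_le_lfp {C P : Type*} [Preorder P] (S : C → C → Prop)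
    (α : C → Set P) (D : Set P → P → Prop)
    (hDmono : ∀ X Y : Set P, X ⊆ Y → ∀ f, D X f → D Y f)
    (hsound : ∀ c c', Relation.ReflTransGen S c c' →
      ∀ Δ : Set P, HoareLe (α c) Δ →
        ∃ Δ', Relation.ReflTransGen (DeriveStep D) Δ Δ' ∧ HoareLe (α c') Δ')
    (c : C) (Δ : Set P) (hΔ : HoareLe (α c) Δ)
    (G : Set P →o Set P) (hG : ∀ X : Set P, G X = {p | D X p} ∪ Δ) :
    HoareLe (liftAbs α {c' | Relation.ReflTransGen S c c'}) (OrderHom.lfp G) :=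
  sound_approx_le_lfp_general S α D hsound c Δ hΔ G hG
end

section
/- Let C be a type, S a binary relation on C, P a preorder, α : C → Set P, and D : Set P → P → Prop a one-step fact-derivation relation that is (i) monotone with respect to set inclusion (X ⊆ Y and D X f imply D Y f) and (ii) one-step monotone with respect to the Hoare order (Δ ⊑ Δ' and D Δ f imply there exists f' ≥ f with D Δ' f'). Suppose the abstract semantics over-approximates each small step: for all c, c' with S c c', α(c') ⊑ {p | D (α c) p}. Then for every c : C and every Δ with α(c) ⊑ Δ, α*({c' | ReflTransGen S c c'}) ⊑ lfp (X ↦ {p | D X p} ∪ Δ), where the least fixed point is taken in (Set P, ⊆) and ⊑ is the Hoare order. -/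
namespace HoareLe

variable {P : Type*} [Preorder P]

theorem trans {Δ₁ Δ₂ Δ₃ : Set P} (h₁₂ : HoareLe Δ₁ Δ₂) (h₂₃ : HoareLe Δ₂ Δ₃) :
    HoareLe Δ₁ Δ₃ := by
  intro p₁ hp₁
  obtain ⟨p₂, hp₂, hle₁₂⟩ := h₁₂ p₁ hp₁
  obtain ⟨p₃, hp₃, hle₂₃⟩ := h₂₃ p₂ hp₂
  exact ⟨p₃, hp₃, hle₁₂.trans hle₂₃⟩

theorem mono_right_s7 {Δ₁ Δ₂ Δ₃ : Set P} (h : HoareLe Δ₁ Δ₂) (hs : Δ₂ ⊆ Δ₃) : HoareLe Δ₁ Δ₃ :=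
  fun p hp ↦ (h p hp).imp fun _ ⟨hq, hle⟩ ↦ ⟨hs hq, hle⟩

theorem setOf_derive {D : Set P → P → Prop}
    (hDhoare : ∀ Δ Δ' : Set P, ∀ f, HoareLe Δ Δ' → D Δ f → ∃ f', f ≤ f' ∧ D Δ' f')
    {Δ Δ' : Set P} (h : HoareLe Δ Δ') : HoareLe {p | D Δ p} {p | D Δ' p} :=
  fun f hf ↦ (hDhoare Δ Δ' f h hf).imp fun _ ⟨hle, hD⟩ ↦ ⟨hD, hle⟩

theorem liftAbs_left_iff {C : Type*} {α : C → Set P} {S : Set C} {Δ : Set P} :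
    HoareLe (liftAbs α S) Δ ↔ ∀ c ∈ S, HoareLe (α c) Δ := by
  simp only [HoareLe, liftAbs, Set.mem_iUnion₂]
  exact ⟨fun h c hc p hp ↦ h p ⟨c, hc, hp⟩, fun h p ⟨c, hc, hp⟩ ↦ h c hc p hp⟩

end HoareLe

theorem hoareLe_of_reflTransGen {C P : Type*} [Preorder P] {S : C → C → Prop} {α : C → Set P}
    {D : Set P → P → Prop}
    (hDhoare : ∀ Δ Δ' : Set P, ∀ f, HoareLe Δ Δ' → D Δ f → ∃ f', f ≤ f' ∧ D Δ' f')
    (happrox : ∀ c c', S c c' → HoareLe (α c') {p | D (α c) p})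
    {X : Set P} (hX : {p | D X p} ⊆ X) {c c' : C} (hc : HoareLe (α c) X)
    (h : Relation.ReflTransGen S c c') : HoareLe (α c') X := by
  induction h with
  | refl => exact hc
  | tail _ hstep ih =>
    exact ((happrox _ _ hstep).trans (HoareLe.setOf_derive hDhoare ih)).mono_right_s7 hX

theorem one_step_approx_le_lfp_general {C P : Type*} [Preorder P] (S : C → C → Prop)
    (α : C → Set P) (D : Set P → P → Prop)
    (hDhoare : ∀ Δ Δ' : Set P, ∀ f, HoareLe Δ Δ' → D Δ f → ∃ f', f ≤ f' ∧ D Δ' f')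
    (happrox : ∀ c c', S c c' → HoareLe (α c') {p | D (α c) p})
    (c : C) (Δ : Set P) (hΔ : HoareLe (α c) Δ)
    (G : Set P →o Set P) (hG : ∀ X : Set P, G X = {p | D X p} ∪ Δ) :
    HoareLe (liftAbs α {c' | Relation.ReflTransGen S c c'}) (OrderHom.lfp G) := by
  have hfix : {p | D (OrderHom.lfp G) p} ∪ Δ = OrderHom.lfp G := by
    rw [← hG, OrderHom.map_lfp]
  have hclosed : {p | D (OrderHom.lfp G) p} ⊆ OrderHom.lfp G :=
    Set.subset_union_left.trans hfix.subset
  have hbase : HoareLe (α c) (OrderHom.lfp G) :=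
    hΔ.mono_right_s7 (Set.subset_union_right.trans hfix.subset)
  exact HoareLe.liftAbs_left_iff.mpr fun _ hc' ↦
    hoareLe_of_reflTransGen hDhoare happrox hclosed hbase hc'

/-- One-step over-approximation together with monotonicity of the abstract semantics
suffices for soundness in least-fixed-point form. -/
theorem one_step_approx_le_lfp {C P : Type*} [Preorder P] (S : C → C → Prop)
    (α : C → Set P) (D : Set P → P → Prop)
    (hDmono : ∀ X Y : Set P, X ⊆ Y → ∀ f, D X f → D Y f)
    (hDhoare : ∀ Δ Δ' : Set P, ∀ f, HoareLe Δ Δ' → D Δ f → ∃ f', f ≤ f' ∧ D Δ' f')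
    (happrox : ∀ c c', S c c' → HoareLe (α c') {p | D (α c) p})
    (c : C) (Δ : Set P) (hΔ : HoareLe (α c) Δ)
    (G : Set P →o Set P) (hG : ∀ X : Set P, G X = {p | D X p} ∪ Δ) :
    HoareLe (liftAbs α {c' | Relation.ReflTransGen S c c'}) (OrderHom.lfp G) :=
  one_step_approx_le_lfp_general S α D hDhoare happrox c Δ hΔ G hG
end

section
/- Let m : ℕ → ℕ be a byte memory with m i < 256 for all i, and define the word-packed memory W : ℕ → ℕ by W x = ∑_{i=0}^{31} m (32·x + i) · 256^(31−i) (big-endian packing of 32 consecutive bytes into one word). Then for every byte offset p : ℕ, the word read at byte offset p, namely ∑_{i=0}^{31} m (p + i) · 256^(31−i), is correctly recovered from the word-packed memory: if p % 32 = 0 it equals W (p / 32); otherwise, writing k = p % 32 and q = p / 32, it equals (W q % 256^(32−k)) · 256^k + W (q + 1) / 256^(32−k) (with integer division). -/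
/-!
Read as big-endian base-256 numerals, a 32-byte word splits at any cut into high digits times a
power of 256 plus low digits, and the low part is smaller than that power. So `W q % 256 ^ (32 - k)`
is exactly the tail of block `q` from byte `k` on, `W (q + 1) / 256 ^ (32 - k)` is exactly the first
`k` bytes of block `q + 1`, and the unaligned word is their concatenation.
-/

open Finset

namespace Nat

def ofDigitsBE (b : ℕ) (f : ℕ → ℕ) (n : ℕ) : ℕ :=
  ∑ i ∈ range n, f i * b ^ (n - 1 - i)

variable {b : ℕ} {f : ℕ → ℕ}

theorem ofDigitsBE_add (k j : ℕ) :
    ofDigitsBE b f (k + j) = ofDigitsBE b f k * b ^ j + ofDigitsBE b (fun i => f (k + i)) j := by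
  unfold ofDigitsBE
  rw [sum_range_add, sum_mul]
  congr 1 <;> refine sum_congr rfl fun i hi => ?_ <;> rw [mem_range] at hi
  · rw [mul_assoc, ← pow_add]
    congr 2
    omega
  · congr 2
    omega

theorem ofDigitsBE_succ (n : ℕ) : ofDigitsBE b f (n + 1) = ofDigitsBE b f n * b + f n := by
  rw [ofDigitsBE_add]
  simp [ofDigitsBE]

theorem ofDigitsBE_lt (n : ℕ) (hf : ∀ i < n, f i < b) : ofDigitsBE b f n < b ^ n := by
  induction n with
  | zero => simp [ofDigitsBE]
  | succ n ih =>
    have hlt := ih fun i hi => hf i (by omega)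
    calc ofDigitsBE b f (n + 1) = ofDigitsBE b f n * b + f n := ofDigitsBE_succ n
      _ < (ofDigitsBE b f n + 1) * b := by linarith [hf n n.lt_succ_self]
      _ ≤ b ^ n * b := Nat.mul_le_mul_right b hlt
      _ = b ^ (n + 1) := (pow_succ b n).symm

theorem ofDigitsBE_add_mod (hf : ∀ i, f i < b) (k j : ℕ) :
    ofDigitsBE b f (k + j) % b ^ j = ofDigitsBE b (fun i => f (k + i)) j := by
  rw [ofDigitsBE_add, Nat.mul_add_mod_self_right, Nat.mod_eq_of_lt (ofDigitsBE_lt j fun i _ => hf _)]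

theorem ofDigitsBE_add_div (hf : ∀ i, f i < b) (k j : ℕ) :
    ofDigitsBE b f (k + j) / b ^ j = ofDigitsBE b f k := by
  have hpos : 0 < b ^ j := pow_pos (lt_of_le_of_lt (Nat.zero_le _) (hf 0)) j
  rw [ofDigitsBE_add, add_comm, Nat.add_mul_div_right _ _ hpos,
    Nat.div_eq_of_lt (ofDigitsBE_lt j fun i _ => hf _), zero_add]

theorem ofDigitsBE_window (hf : ∀ i, f i < b) (n q : ℕ) {k : ℕ} (hk : k ≤ n) :
    ofDigitsBE b (fun i => f (n * q + k + i)) n =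
      ofDigitsBE b (fun i => f (n * q + i)) n % b ^ (n - k) * b ^ k +
        ofDigitsBE b (fun i => f (n * (q + 1) + i)) n / b ^ (n - k) := by
  obtain ⟨j, rfl⟩ : ∃ j, n = k + j := ⟨n - k, by omega⟩
  rw [Nat.add_sub_cancel_left, ofDigitsBE_add_mod (fun _ => hf _),
    ofDigitsBE_add_div (fun _ => hf _), add_comm k j, ofDigitsBE_add]
  simp only [mul_add, mul_one, add_assoc, add_left_comm k j]

end Nat

/-- Soundness of word-indexed memory access: the word at an arbitrary byte offset p in a
byte memory m is correctly recovered from the word-packed memory W (big-endian packing). -/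
theorem word_access_sound (m : ℕ → ℕ) (hm : ∀ i : ℕ, m i < 256)
    (W : ℕ → ℕ)
    (hW : ∀ x : ℕ, W x = ∑ i ∈ Finset.range 32, m (32 * x + i) * 256 ^ (31 - i)) :
    ∀ p : ℕ,
      (∑ i ∈ Finset.range 32, m (p + i) * 256 ^ (31 - i)) =
        if p % 32 = 0 then W (p / 32)
        else (W (p / 32) % 256 ^ (32 - p % 32)) * 256 ^ (p % 32) +
          W (p / 32 + 1) / 256 ^ (32 - p % 32) := by
  intro p
  have hW' : ∀ x, W x = Nat.ofDigitsBE 256 (fun i => m (32 * x + i)) 32 := hW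
  change Nat.ofDigitsBE 256 (fun i => m (p + i)) 32 = _
  obtain ⟨q, k, hk, rfl⟩ : ∃ q k, k < 32 ∧ p = 32 * q + k :=
    ⟨p / 32, p % 32, Nat.mod_lt _ (by norm_num), (Nat.div_add_mod p 32).symm⟩
  rw [show (32 * q + k) / 32 = q by omega, show (32 * q + k) % 32 = k by omega, hW', hW']
  split_ifs with hk0
  · simp [hk0]
  · exact Nat.ofDigitsBE_window hm 32 q hk.le
end

section
/- Let ⊑ be the flat order on WithTop ℕ, and let accessword : (ℕ → WithTop ℕ) → ℕ → WithTop ℕ be the word-access function defined via the abstract byte-extraction and abstract append. Let size : ℕ with size ≥ 1, let s, s' : ℕ → WithTop ℕ be abstract stacks with s i ⊑ s' i for all i < size, and let m, m' : ℕ → WithTop ℕ be abstract memories with m n ⊑ m' n for all n. Define v = accessword m o if s (size − 1) = some o and v = ⊤ if s (size − 1) = ⊤, and define v' analogously from s' and m'. Then for all i < size, (Function.update s (size − 1) v) i ⊑ (Function.update s' (size − 1) v') i. This is the monotonicity of the abstract-semantics clause for the MLOAD memory-load operation. -/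
/-- The flat order on WithTop ℕ: a ⊑ b iff b = ⊤ or a = b. -/
def FlatLe (a b : WithTop ℕ) : Prop := b = ⊤ ∨ a = b

/-- Abstract byte-extraction from an abstract word. -/
def extract : WithTop ℕ → ℕ → ℕ → WithTop ℕ
  | some n, l, r => if l ≤ r then some (n / 256 ^ (31 - r) % 256 ^ (r - l + 1)) else ⊤
  | ⊤, _, _ => ⊤

/-- Abstract append of (the byte representations of) two abstract values. -/
def absAppend (n : ℕ) : WithTop ℕ → WithTop ℕ → WithTop ℕ
  | some v, some w => some (w * 256 ^ n + v)
  | _, _ => ⊤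

/-- Word access at byte offset p in a word-indexed abstract memory. -/
def accessword (m : ℕ → WithTop ℕ) (p : ℕ) : WithTop ℕ :=
  if p % 32 = 0 then m (p / 32)
  else absAppend (p % 32) (extract (m (p / 32)) (p % 32) 31)
    (extract (m (p / 32 + 1)) 0 (p % 32 - 1))

/-- The value loaded by MLOAD: the word at a concrete offset, and ⊤ if the offset is ⊤. -/
def absLoad (m : ℕ → WithTop ℕ) : WithTop ℕ → WithTop ℕ
  | some o => accessword m o
  | ⊤ => ⊤

/-! Byte extraction and append are strict: they return `⊤` as soon as an argument is `⊤`. Strict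
functions are monotone for the flat order, and word access and MLOAD are built from them. -/

namespace FlatLe

theorem map {f : WithTop ℕ → WithTop ℕ} (hf : f ⊤ = ⊤) {a b : WithTop ℕ} (h : FlatLe a b) :
    FlatLe (f a) (f b) := by
  rcases h with rfl | rfl
  · exact Or.inl hf
  · exact Or.inr rfl

theorem map₂ {f : WithTop ℕ → WithTop ℕ → WithTop ℕ} (hf₁ : ∀ y, f ⊤ y = ⊤)
    (hf₂ : ∀ x, f x ⊤ = ⊤) {a b c d : WithTop ℕ} (hab : FlatLe a b) (hcd : FlatLe c d) :
    FlatLe (f a c) (f b d) := by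
  rcases hab with rfl | rfl
  · exact Or.inl (hf₁ d)
  · exact hcd.map (hf₂ a)

end FlatLe

theorem extract_mono {a b : WithTop ℕ} (h : FlatLe a b) (l r : ℕ) :
    FlatLe (extract a l r) (extract b l r) :=
  h.map (f := fun x => extract x l r) rfl

theorem absAppend_mono (n : ℕ) {a b c d : WithTop ℕ} (hab : FlatLe a b) (hcd : FlatLe c d) :
    FlatLe (absAppend n a c) (absAppend n b d) :=
  FlatLe.map₂ (f := absAppend n) (fun _ => rfl) (fun x => by cases x <;> rfl) hab hcd

theorem accessword_mono {m m' : ℕ → WithTop ℕ} (hm : ∀ n, FlatLe (m n) (m' n)) (p : ℕ) :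
    FlatLe (accessword m p) (accessword m' p) := by
  unfold accessword
  split
  · exact hm _
  · exact absAppend_mono _ (extract_mono (hm _) _ _) (extract_mono (hm _) _ _)

theorem absLoad_mono {m m' : ℕ → WithTop ℕ} (hm : ∀ n, FlatLe (m n) (m' n))
    {a b : WithTop ℕ} (h : FlatLe a b) : FlatLe (absLoad m a) (absLoad m' b) := by
  rcases h with rfl | rfl
  · exact Or.inl rfl
  · cases a with
    | top => exact Or.inl rfl
    | coe o => exact accessword_mono hm o

theorem mload_stack_monotone_general (size : ℕ)
    (s s' : ℕ → WithTop ℕ) (hs : ∀ i < size, FlatLe (s i) (s' i))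
    (m m' : ℕ → WithTop ℕ) (hm : ∀ n : ℕ, FlatLe (m n) (m' n)) :
    ∀ i < size,
      FlatLe
        (Function.update s (size - 1) (absLoad m (s (size - 1))) i)
        (Function.update s' (size - 1) (absLoad m' (s' (size - 1))) i) := by
  intro i hi
  rcases eq_or_ne i (size - 1) with rfl | hne
  · simp only [Function.update_self]
    exact absLoad_mono hm (hs _ hi)
  · simp only [Function.update_of_ne hne]
    exact hs i hi

/-- Monotonicity of the abstract-semantics clause for MLOAD. -/
theorem mload_stack_monotone (size : ℕ) (hsize : 1 ≤ size)
    (s s' : ℕ → WithTop ℕ) (hs : ∀ i < size, FlatLe (s i) (s' i))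
    (m m' : ℕ → WithTop ℕ) (hm : ∀ n : ℕ, FlatLe (m n) (m' n)) :
    ∀ i < size,
      FlatLe
        (Function.update s (size - 1) (absLoad m (s (size - 1))) i)
        (Function.update s' (size - 1) (absLoad m' (s' (size - 1))) i) :=
  mload_stack_monotone_general size s s' hs m m' hm
end
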